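/- Let u : ℝⁿ → ℝⁿ be a C¹ divergence-free vector field, i.e. tr Du(x) = 0 for all x. Let x, ξ be differentiable curves with x'(t) = u(x(t)), ξ'(t) = −(Du(x(t)))ᵀ ξ(t), and ξ(t) ≠ 0 for all t, and let b₁, …, b_{n−1} : ℝ → ℂⁿ be differentiable solutions of the kinematic dynamo amplitude equation bᵢ'(t) = Du(x(t)) bᵢ(t) satisfying bᵢ(0)·ξ(0) = 0. Then the function t ↦ det[b₁(t), …, b_{n−1}(t), ξ(t)] · ‖ξ(t)‖^{−2} is constant, where det[v₁, …, vₙ] denotes the determinant of the n×n complex matrix with columns v₁, …, vₙ (ξ(t) viewed in ℂⁿ). -/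

import Mathlib

/-!
Let `M(t)` be the matrix with rows `b₁, …, b_{n-1}, ξ` (the transpose of the one in the statement)
and `A = Du(x(t))`. Since `b' = Ab` and `ξ' = -Aᵀξ` are adjoint equations, every `bᵢ ⬝ ξ` is
constant, hence zero. Writing `ξ' = Aξ + w` with `w = -(A + Aᵀ)ξ`, Jacobi's formula and `tr A = 0`
give `(det M)' = det (M with last row w)`; as the other rows are orthogonal to `ξ`, only the
component `(w ⬝ ξ / ξ ⬝ ξ) ξ` of `w` contributes, and `w ⬝ ξ = (ξ ⬝ ξ)'`. So `det M` and `ξ ⬝ ξ`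
solve the same scalar linear equation, and their ratio is constant.
-/

noncomputable def jacobian {n : ℕ} (u : (Fin n → ℝ) → (Fin n → ℝ)) (x : Fin n → ℝ) :
    Matrix (Fin n) (Fin n) ℝ :=
  Matrix.of fun i j => fderiv ℝ u x (Pi.single j 1) i

open Matrix

section LinearAlgebra

variable {ι : Type*} [Fintype ι] [DecidableEq ι]

theorem Matrix.sum_det_updateRow_mulVec {R : Type*} [CommRing R] (M A : Matrix ι ι R) :
    ∑ i, (M.updateRow i (A *ᵥ M i)).det = A.trace * M.det := by
  calc ∑ i, (M.updateRow i (A *ᵥ M i)).det = (Mᵀ.adjugate * A * Mᵀ).trace := by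
        refine Finset.sum_congr rfl fun i _ => ?_
        rw [← cramer_transpose_apply, cramer_eq_adjugate_mulVec, mulVec_mulVec]
        simp [Matrix.mul_apply, mulVec, dotProduct]
    _ = (Mᵀ * Mᵀ.adjugate * A).trace := by rw [trace_mul_comm, ← Matrix.mul_assoc]
    _ = A.trace * M.det := by simp [mul_adjugate, mul_comm]

theorem Matrix.sum_det_updateRow_mulVec_add_single {R : Type*} [CommRing R]
    (M A : Matrix ι ι R) (l : ι) (w : ι → R) :
    ∑ i, (M.updateRow i (A *ᵥ M i + (Pi.single l w : ι → ι → R) i)).det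
      = A.trace * M.det + (M.updateRow l w).det := by
  simp only [det_updateRow_add, Finset.sum_add_distrib, sum_det_updateRow_mulVec]
  congr 1
  refine (Finset.sum_eq_single l (fun i _ hi => ?_) (by simp)).trans (by simp)
  exact det_eq_zero_of_row_eq_zero i fun j => by simp [hi]

theorem Matrix.det_updateRow_eq_of_dotProduct_eq_zero {K : Type*} [Field K]
    (M : Matrix ι ι K) {l : ι} (hl : M l ⬝ᵥ M l ≠ 0) (horth : ∀ i ≠ l, M i ⬝ᵥ M l = 0)
    (w : ι → K) : (M.updateRow l w).det = (w ⬝ᵥ M l / (M l ⬝ᵥ M l)) * M.det := by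
  set a := w ⬝ᵥ M l / (M l ⬝ᵥ M l)
  have hrest : (M.updateRow l (w - a • M l)).det = 0 := by
    refine exists_mulVec_eq_zero_iff.1 ⟨M l, fun h => hl (by simp [h]), funext fun i => ?_⟩
    change (M.updateRow l (w - a • M l)) i ⬝ᵥ M l = 0
    by_cases hi : i = l
    · rw [hi, updateRow_self, sub_dotProduct, smul_dotProduct, smul_eq_mul,
        div_mul_cancel₀ _ hl, sub_self]
    · rw [updateRow_ne hi, horth i hi]
  calc (M.updateRow l w).det = (M.updateRow l (a • M l + (w - a • M l))).det := by
        rw [add_sub_cancel]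
    _ = a * M.det := by
        rw [det_updateRow_add, hrest, add_zero, det_updateRow_smul, updateRow_eq_self]

end LinearAlgebra

section Calculus

variable {𝕜 ι : Type*} [NontriviallyNormedField 𝕜] [NormedAlgebra ℝ 𝕜] [Fintype ι]

theorem HasDerivAt.det_of_rows [DecidableEq ι] {c : ℝ → ι → ι → 𝕜} {c' : ι → ι → 𝕜} {t : ℝ}
    (h : HasDerivAt c c' t) :
    HasDerivAt (fun s => (of (c s)).det) (∑ i, ((of (c t)).updateRow i (c' i)).det) t := by
  let detMap : ContinuousMultilinearMap ℝ (fun _ : ι => ι → 𝕜) 𝕜 :=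
    ⟨(detRowAlternating (R := 𝕜)).toMultilinearMap.restrictScalars ℝ,
      continuous_id.matrix_det⟩
  have := (detMap.hasFDerivAt (c t)).comp_hasDerivAt t h
  rwa [ContinuousMultilinearMap.linearDeriv_apply] at this

theorem HasDerivAt.dotProduct {v w : ℝ → ι → 𝕜} {v' w' : ι → 𝕜} {t : ℝ}
    (hv : HasDerivAt v v' t) (hw : HasDerivAt w w' t) :
    HasDerivAt (fun s => v s ⬝ᵥ w s) (v' ⬝ᵥ w t + v t ⬝ᵥ w') t := by
  simp only [_root_.dotProduct, ← Finset.sum_add_distrib]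
  exact HasDerivAt.fun_sum fun i _ => (hasDerivAt_pi.1 hv i).mul (hasDerivAt_pi.1 hw i)

theorem dotProduct_eq_of_hasDerivAt_adjoint {A : ℝ → Matrix ι ι 𝕜} {v w : ℝ → ι → 𝕜}
    (hv : ∀ t, HasDerivAt v (A t *ᵥ v t) t) (hw : ∀ t, HasDerivAt w (-((A t)ᵀ *ᵥ w t)) t)
    (t₁ t₂ : ℝ) : v t₁ ⬝ᵥ w t₁ = v t₂ ⬝ᵥ w t₂ := by
  have hderiv : ∀ t, HasDerivAt (fun s => v s ⬝ᵥ w s) 0 t := fun t => by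
    convert (hv t).dotProduct (hw t) using 1
    rw [dotProduct_neg, mulVec_transpose, dotProduct_comm (v t), ← dotProduct_mulVec,
      dotProduct_comm, add_neg_cancel]
  exact is_const_of_deriv_eq_zero (fun t => (hderiv t).differentiableAt)
    (fun t => (hderiv t).deriv) t₁ t₂

theorem div_eq_div_of_hasDerivAt_mul {f g k : ℝ → 𝕜} (hf : ∀ t, HasDerivAt f (k t * f t) t)
    (hg : ∀ t, HasDerivAt g (k t * g t) t) (hg0 : ∀ t, g t ≠ 0) (t₁ t₂ : ℝ) :
    f t₁ / g t₁ = f t₂ / g t₂ := by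
  have hderiv : ∀ t, HasDerivAt (f / g) 0 t := fun t => by
    convert (hf t).div (hg t) (hg0 t) using 1
    ring
  exact is_const_of_deriv_eq_zero (fun t => (hderiv t).differentiableAt)
    (fun t => (hderiv t).deriv) t₁ t₂

end Calculus

theorem det_div_dotProduct_self_eq {𝕜 ι : Type*} [NontriviallyNormedField 𝕜] [NormedAlgebra ℝ 𝕜]
    [Fintype ι] [DecidableEq ι] (A : ℝ → Matrix ι ι 𝕜) (hA : ∀ t, (A t).trace = 0)
    (c : ℝ → ι → ι → 𝕜) (l : ι)
    (hc : ∀ i ≠ l, ∀ t, HasDerivAt (fun s => c s i) (A t *ᵥ c t i) t)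
    (hl : ∀ t, HasDerivAt (fun s => c s l) (-((A t)ᵀ *ᵥ c t l)) t)
    (hne : ∀ t, c t l ⬝ᵥ c t l ≠ 0) (h0 : ∀ i ≠ l, c 0 i ⬝ᵥ c 0 l = 0) (t₁ t₂ : ℝ) :
    (of (c t₁)).det / (c t₁ l ⬝ᵥ c t₁ l) = (of (c t₂)).det / (c t₂ l ⬝ᵥ c t₂ l) := by
  set q : ℝ → 𝕜 := fun t => A t *ᵥ c t l ⬝ᵥ c t l
  have hq : ∀ t, (A t)ᵀ *ᵥ c t l ⬝ᵥ c t l = q t := fun t => by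
    rw [mulVec_transpose, ← dotProduct_mulVec, dotProduct_comm]
  have horth : ∀ i ≠ l, ∀ t, of (c t) i ⬝ᵥ of (c t) l = 0 := fun i hi t =>
    (dotProduct_eq_of_hasDerivAt_adjoint (hc i hi) hl t 0).trans (h0 i hi)
  set w : ℝ → ι → 𝕜 := fun t => -((A t + (A t)ᵀ) *ᵥ c t l)
  have hrows : ∀ t,
      HasDerivAt c (fun i => A t *ᵥ c t i + (Pi.single l (w t) : ι → ι → 𝕜) i) t :=
    fun t => hasDerivAt_pi.2 fun i => by
      by_cases hi : i = l
      · rw [hi, Pi.single_eq_same]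
        refine (hl t).congr_deriv ?_
        simp only [w, add_mulVec]
        abel
      · simpa [hi] using hc i hi t
  set k : ℝ → 𝕜 := fun t => -2 * q t / (c t l ⬝ᵥ c t l)
  have hdet : ∀ t, HasDerivAt (fun s => (of (c s)).det) (k t * (of (c t)).det) t := fun t => by
    refine (hrows t).det_of_rows.congr_deriv ?_
    refine (sum_det_updateRow_mulVec_add_single (of (c t)) (A t) l (w t)).trans ?_
    rw [hA, zero_mul, zero_add,
      det_updateRow_eq_of_dotProduct_eq_zero (of (c t)) (hne t) (horth · · t)]
    congr 2
    change w t ⬝ᵥ c t l = -2 * q t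
    rw [neg_dotProduct, add_mulVec, add_dotProduct, hq]
    ring
  have hnorm : ∀ t, HasDerivAt (fun s => c s l ⬝ᵥ c s l) (k t * (c t l ⬝ᵥ c t l)) t := fun t => by
    convert (hl t).dotProduct (hl t) using 1
    rw [div_mul_cancel₀ _ (hne t), neg_dotProduct, dotProduct_neg, dotProduct_comm (c t l), hq]
    ring
  exact div_eq_div_of_hasDerivAt_mul hdet hnorm hne t₁ t₂

theorem det_of_cols_div_dotProduct_self_eq {𝕜 : Type*} [NontriviallyNormedField 𝕜]
    [NormedAlgebra ℝ 𝕜] {n : ℕ} (A : ℝ → Matrix (Fin n) (Fin n) 𝕜) (hA : ∀ t, (A t).trace = 0)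
    (b : Fin (n - 1) → ℝ → Fin n → 𝕜) (ξ : ℝ → Fin n → 𝕜)
    (hb : ∀ i t, HasDerivAt (b i) (A t *ᵥ b i t) t)
    (hξ : ∀ t, HasDerivAt ξ (-((A t)ᵀ *ᵥ ξ t)) t)
    (hne : ∀ t, ξ t ⬝ᵥ ξ t ≠ 0) (h0 : ∀ i, b i 0 ⬝ᵥ ξ 0 = 0) (t₁ t₂ : ℝ) :
    (of fun i (j : Fin n) => if h : (j : ℕ) < n - 1 then b ⟨j, h⟩ t₁ i else ξ t₁ i).det
        / (ξ t₁ ⬝ᵥ ξ t₁)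
      = (of fun i (j : Fin n) => if h : (j : ℕ) < n - 1 then b ⟨j, h⟩ t₂ i else ξ t₂ i).det
        / (ξ t₂ ⬝ᵥ ξ t₂) := by
  have hn : n ≠ 0 := by
    rintro rfl
    exact hne 0 (Matrix.dotProduct_of_isEmpty _ _)
  set l : Fin n := ⟨n - 1, by omega⟩
  set c : ℝ → Fin n → Fin n → 𝕜 := fun t j => if h : (j : ℕ) < n - 1 then b ⟨j, h⟩ t else ξ t
  have hcl : ∀ t, c t l = ξ t := fun t => dif_neg (by simp [l])
  have hlt : ∀ j ≠ l, (j : ℕ) < n - 1 := fun j hj => by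
    have : (j : ℕ) ≠ n - 1 := fun h => hj (Fin.ext h)
    omega
  have hcj : ∀ j (hj : j ≠ l) t, c t j = b ⟨j, hlt j hj⟩ t := fun j hj t => dif_pos (hlt j hj)
  have hmat : ∀ t, (of fun i (j : Fin n) => if h : (j : ℕ) < n - 1 then b ⟨j, h⟩ t i else ξ t i)
      = (of (c t))ᵀ := fun t => by
    ext i j
    simp only [c, transpose_apply, of_apply]
    split_ifs <;> rfl
  rw [hmat, hmat, det_transpose, det_transpose, ← hcl, ← hcl]
  refine det_div_dotProduct_self_eq A hA c l (fun j hj t => ?_) (fun t => ?_) (fun t => ?_)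
    (fun j hj => ?_) t₁ t₂
  · rw [funext (hcj j hj), hcj j hj]
    exact hb _ t
  · rw [funext hcl, hcl]
    exact hξ t
  · rw [hcl]
    exact hne t
  · rw [hcj j hj, hcl]
    exact h0 _

theorem stmt_5_general {n : ℕ}
    (u : (Fin n → ℝ) → (Fin n → ℝ))
    (hdiv : ∀ y, Matrix.trace (jacobian u y) = 0)
    (x : ℝ → Fin n → ℝ) (ξ : ℝ → Fin n → ℝ) (b : Fin (n - 1) → ℝ → Fin n → ℂ)
    (hξne : ∀ t, ξ t ≠ 0)
    (hξ : ∀ t, HasDerivAt ξ (-((jacobian u (x t)).transpose.mulVec (ξ t))) t)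
    (hb : ∀ i t, HasDerivAt (b i)
      (((jacobian u (x t)).map Complex.ofReal).mulVec (b i t)) t)
    (hb0 : ∀ i, (∑ j, b i 0 j * (ξ 0 j : ℂ)) = 0) :
    ∀ t₁ t₂ : ℝ,
      (Matrix.det (Matrix.of fun i (j : Fin n) =>
            if h : (j : ℕ) < n - 1 then b ⟨j, h⟩ t₁ i else (ξ t₁ i : ℂ)))
          * ((∑ i, ξ t₁ i ^ 2 : ℝ) : ℂ)⁻¹
      = (Matrix.det (Matrix.of fun i (j : Fin n) =>
            if h : (j : ℕ) < n - 1 then b ⟨j, h⟩ t₂ i else (ξ t₂ i : ℂ)))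
          * ((∑ i, ξ t₂ i ^ 2 : ℝ) : ℂ)⁻¹ := by
  set ξc : ℝ → Fin n → ℂ := fun t i => (ξ t i : ℂ)
  set A : ℝ → Matrix (Fin n) (Fin n) ℂ := fun t => (jacobian u (x t)).map Complex.ofReal
  have hA : ∀ t, (A t).trace = 0 := fun t => by
    change ((jacobian u (x t)).map Complex.ofRealHom).trace = 0
    rw [← AddMonoidHom.map_trace, hdiv, map_zero]
  have hξc : ∀ t, HasDerivAt ξc (-((A t)ᵀ *ᵥ ξc t)) t := fun t => by
    refine hasDerivAt_pi.2 fun i => (hasDerivAt_pi.1 (hξ t) i).ofReal_comp.congr_deriv ?_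
    rw [Pi.neg_apply, Pi.neg_apply, Complex.ofReal_neg, ← Complex.ofRealHom_eq_coe,
      RingHom.map_mulVec, transpose_map]
    rfl
  have hnorm : ∀ t, ((∑ i, ξ t i ^ 2 : ℝ) : ℂ) = ξc t ⬝ᵥ ξc t := fun t => by
    simp [ξc, dotProduct, sq]
  have hne : ∀ t, ξc t ⬝ᵥ ξc t ≠ 0 := fun t => by
    rw [← hnorm, Complex.ofReal_ne_zero]
    simpa [dotProduct, sq] using dotProduct_self_eq_zero.not.2 (hξne t)
  intro t₁ t₂
  simp only [hnorm, ← div_eq_mul_inv]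
  exact det_of_cols_div_dotProduct_self_eq A hA b ξc hb hξc hne hb0 t₁ t₂

/-- For the kinematic dynamo amplitude equation `bᵢ' = Du(x) bᵢ` with a
divergence-free `u`, the quantity `det[b₁,…,b_{n−1},ξ] · ‖ξ‖⁻²` is conserved. -/
theorem stmt_5 {n : ℕ}
    (u : (Fin n → ℝ) → (Fin n → ℝ)) (hu : ContDiff ℝ 1 u)
    (hdiv : ∀ y, Matrix.trace (jacobian u y) = 0)
    (x : ℝ → Fin n → ℝ) (ξ : ℝ → Fin n → ℝ) (b : Fin (n - 1) → ℝ → Fin n → ℂ)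
    (hξne : ∀ t, ξ t ≠ 0)
    (hx : ∀ t, HasDerivAt x (u (x t)) t)
    (hξ : ∀ t, HasDerivAt ξ (-((jacobian u (x t)).transpose.mulVec (ξ t))) t)
    (hb : ∀ i t, HasDerivAt (b i)
      (((jacobian u (x t)).map Complex.ofReal).mulVec (b i t)) t)
    (hb0 : ∀ i, (∑ j, b i 0 j * (ξ 0 j : ℂ)) = 0) :
    ∀ t₁ t₂ : ℝ,
      (Matrix.det (Matrix.of fun i (j : Fin n) =>
            if h : (j : ℕ) < n - 1 then b ⟨j, h⟩ t₁ i else (ξ t₁ i : ℂ)))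
          * ((∑ i, ξ t₁ i ^ 2 : ℝ) : ℂ)⁻¹
      = (Matrix.det (Matrix.of fun i (j : Fin n) =>
            if h : (j : ℕ) < n - 1 then b ⟨j, h⟩ t₂ i else (ξ t₂ i : ℂ)))
          * ((∑ i, ξ t₂ i ^ 2 : ℝ) : ℂ)⁻¹ :=
  stmt_5_general u hdiv x ξ b hξne hξ hb hb0
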